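/- Let D be a connected, minimally rich domain and P* ∈ D such that all neighbours of D^TCC(P*) in D share the same top alternative b, where a = r_1(P*) and b ≠ a. Define f: D^n → A by: f(P) = a if P_1 ∈ D^TCC(P*) and a P_2 b; f(P) = b if P_1 ∈ D^TCC(P*) and b P_2 a; f(P) = r_1(P_1) if P_1 ∉ D^TCC(P*). Then f is unanimous, locally strategy-proof, and not dictatorial. -/
import Mathlib


open Relation

/-- A preference is a ranking: a bijection from alternatives to ranks (0 = best). -/
abbrev Pref (A : Type*) [Fintype A] := A ≃ Fin (Fintype.card A)

namespace Pref

variable {A : Type*} [Fintype A]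

/-- The rank (as a natural number, 0 = best) of alternative `a` in preference `P`. -/
def rk (P : Pref A) (a : A) : ℕ := (P a : ℕ)

/-- The top-ranked alternative of `P`. -/
noncomputable def top [Nonempty A] (P : Pref A) : A := P.symm ⟨0, Fintype.card_pos⟩

/-- `a` is strictly preferred to `b` under `P`. -/
def SPrefers (P : Pref A) (a b : A) : Prop := rk P a < rk P b

/-- Two preferences are adjacent if they differ by one swap of consecutively
ranked alternatives. -/
def Adjacent (P P' : Pref A) : Prop :=
  ∃ a b : A, rk P a = rk P b + 1 ∧ rk P' a = rk P b ∧ rk P' b = rk P a ∧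
    ∀ c : A, c ≠ a → c ≠ b → rk P c = rk P' c

end Pref

open Pref

variable {A : Type*} [Fintype A] [Nonempty A]

/-- One step between members of the domain `D` along adjacent preferences. -/
def StepRel (D : Set (Pref A)) (P Q : Pref A) : Prop := P ∈ D ∧ Q ∈ D ∧ Adjacent P Q

/-- The domain `D` is connected: any two members are joined by a path of
adjacent preferences inside `D`. -/
def DConnected (D : Set (Pref A)) : Prop :=
  ∀ P ∈ D, ∀ Q ∈ D, ReflTransGen (StepRel D) P Q

/-- One step inside `D` along adjacent preferences keeping the same top. -/
def TStepRel (D : Set (Pref A)) (P Q : Pref A) : Prop :=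
  StepRel D P Q ∧ Pref.top P = Pref.top Q

/-- The top-connected closure of `P` in `D`. -/
def TCC (D : Set (Pref A)) (P : Pref A) : Set (Pref A) :=
  {Q | ReflTransGen (TStepRel D) P Q}

/-- Neighbours of a subset `S` inside the domain `D`. -/
def Nbr (D S : Set (Pref A)) : Set (Pref A) :=
  {Q | Q ∈ D ∧ Q ∉ S ∧ ∃ P ∈ S, Adjacent P Q}

/-- `D` is connected with two distinct neighbours. -/
def CDN (D : Set (Pref A)) : Prop :=
  DConnected D ∧
    ∀ P ∈ D, ∃ Q ∈ Nbr D (TCC D P), ∃ R ∈ Nbr D (TCC D P), Pref.top Q ≠ Pref.top R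

/-- Every alternative is top-ranked in some preference of `D`. -/
def MinimallyRich (D : Set (Pref A)) : Prop := ∀ a : A, ∃ P ∈ D, Pref.top P = a

/-- The edge relation of the induced graph `G(D)` on alternatives. -/
def EdgeD (D : Set (Pref A)) (a b : A) : Prop :=
  ∃ P ∈ D, ∃ P' ∈ D, Adjacent P P' ∧
    Pref.top P = a ∧ Pref.top P' = b ∧ rk P b = 1 ∧ rk P' a = 1

/-- `v 0, v 1, …, v (k-1)` is a path in the induced graph `G(D)`. -/
def IsPathD (D : Set (Pref A)) (k : ℕ) (v : ℕ → A) : Prop :=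
  (∀ i j, i < k → j < k → v i = v j → i = j) ∧
    ∀ i, i + 1 < k → EdgeD D (v i) (v (i + 1))

/-- Connected component of `P` in `D`. -/
def Component (D : Set (Pref A)) (P : Pref A) : Set (Pref A) :=
  {Q | Q ∈ D ∧ ReflTransGen (StepRel D) P Q}

section SCF

variable {n : ℕ} (D : Set (Pref A))

/-- Unanimity. -/
def Unanimous (f : (Fin n → D) → A) : Prop :=
  ∀ (P : Fin n → D) (a : A), (∀ i, Pref.top (P i : Pref A) = a) → f P = a

/-- Local strategy-proofness. -/
def LocallySP (f : (Fin n → D) → A) : Prop :=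
  ∀ (P : Fin n → D) (i : Fin n) (Q : D), Adjacent (P i : Pref A) (Q : Pref A) →
    ¬ SPrefers (P i : Pref A) (f (Function.update P i Q)) (f P)

/-- (Global) strategy-proofness. -/
def StrategyProof (f : (Fin n → D) → A) : Prop :=
  ∀ (P : Fin n → D) (i : Fin n) (Q : D),
    ¬ SPrefers (P i : Pref A) (f (Function.update P i Q)) (f P)

/-- Tops-onlyness. -/
def TopsOnly (f : (Fin n → D) → A) : Prop :=
  ∀ P P' : Fin n → D,
    (∀ i, Pref.top (P i : Pref A) = Pref.top (P' i : Pref A)) → f P = f P'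

/-- Dictatorship. -/
def Dictatorial (f : (Fin n → D) → A) : Prop :=
  ∃ i : Fin n, ∀ P : Fin n → D, f P = Pref.top (P i : Pref A)

/-- Voter `i` is decisive over `a`. -/
def Decisive (f : (Fin n → D) → A) (i : Fin n) (a : A) : Prop :=
  ∀ P : Fin n → D, Pref.top (P i : Pref A) = a → f P = a

end SCF

/-- Case 2 of the proof of Theorem 1: if all neighbours of `TCC(P*)` share the
same top `b ≠ a = top(P*)`, the rule deciding between `a` and `b` by voter 2's
preference inside `TCC(P*)` and following voter 1 outside is unanimous, locally
strategy-proof and not dictatorial. -/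
theorem stmt6 {A : Type*} [Fintype A] [Nonempty A] (hA : 3 ≤ Fintype.card A)
    (D : Set (Pref A)) (hmr : MinimallyRich D) (hconn : DConnected D)
    (Pstar : Pref A) (hP : Pstar ∈ D) (a b : A) (ha : Pref.top Pstar = a)
    (hab : b ≠ a) (hnb : ∀ Q ∈ Nbr D (TCC D Pstar), Pref.top Q = b)
    (n : ℕ) (hn : 2 ≤ n) (f : (Fin n → D) → A)
    (hf : ∀ P : Fin n → D,
      ((P ⟨0, by omega⟩ : Pref A) ∈ TCC D Pstar →
        (Pref.SPrefers (P ⟨1, by omega⟩ : Pref A) a b → f P = a) ∧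
        (Pref.SPrefers (P ⟨1, by omega⟩ : Pref A) b a → f P = b)) ∧
      ((P ⟨0, by omega⟩ : Pref A) ∉ TCC D Pstar →
        f P = Pref.top (P ⟨0, by omega⟩ : Pref A))) :
    Unanimous D f ∧ LocallySP D f ∧ ¬ Dictatorial D f := by

  classical
  -- basic rank lemmas
  have hrk0 : ∀ P : Pref A, rk P (Pref.top P) = 0 := by
    intro P; simp [Pref.rk, Pref.top]
  have hzero : ∀ (P : Pref A) (x : A), rk P x = 0 → x = Pref.top P := by
    intro P x hx
    have hPx : P x = ⟨0, Fintype.card_pos⟩ := Fin.ext hx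
    rw [Pref.top, ← hPx, Equiv.symm_apply_apply]
  have hne : ∀ (P : Pref A) (x y : A), x ≠ y → rk P x ≠ rk P y := by
    intro P x y hxy h
    exact hxy (P.injective (Fin.ext h))
  have hpreftop : ∀ (P : Pref A) (x : A), x ≠ Pref.top P →
      Pref.SPrefers P (Pref.top P) x := by
    intro P x hx
    have h1 : rk P x ≠ 0 := fun h => hx (hzero P x h)
    have h2 := hrk0 P
    unfold Pref.SPrefers
    omega
  have hnotbelow : ∀ (P : Pref A) (x : A), ¬ Pref.SPrefers P x (Pref.top P) := by
    intro P x h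
    unfold Pref.SPrefers at h
    rw [hrk0 P] at h
    omega
  have htri : ∀ P : Pref A, Pref.SPrefers P a b ∨ Pref.SPrefers P b a := by
    intro P
    have := hne P a b (Ne.symm hab)
    unfold Pref.SPrefers
    omega
  -- every member of the TCC top-ranks a
  have htop : ∀ Q ∈ TCC D Pstar, Pref.top Q = a := by
    intro Q hQ
    induction hQ with
    | refl => exact ha
    | tail _ hstep ih => rw [← hstep.2]; exact ih
  set z0 : Fin n := ⟨0, by omega⟩ with hz0
  set z1 : Fin n := ⟨1, by omega⟩ with hz1
  have hz01 : z0 ≠ z1 := by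
    intro h
    rw [hz0, hz1] at h
    exact absurd (congrArg Fin.val h) (by simp)
  have hfa : ∀ P : Fin n → D, ((P z0 : Pref A) ∈ TCC D Pstar) →
      Pref.SPrefers (P z1 : Pref A) a b → f P = a := fun P h h' => ((hf P).1 h).1 h'
  have hfb : ∀ P : Fin n → D, ((P z0 : Pref A) ∈ TCC D Pstar) →
      Pref.SPrefers (P z1 : Pref A) b a → f P = b := fun P h h' => ((hf P).1 h).2 h'
  have hfo : ∀ P : Fin n → D, ((P z0 : Pref A) ∉ TCC D Pstar) →
      f P = Pref.top (P z0 : Pref A) := fun P h => (hf P).2 h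
  -- f is determined by coordinates 0 and 1
  have hdet : ∀ P P' : Fin n → D, P z0 = P' z0 → P z1 = P' z1 → f P = f P' := by
    intro P P' h0 h1
    by_cases h : (P z0 : Pref A) ∈ TCC D Pstar
    · rcases htri (P z1 : Pref A) with hp | hp
      · rw [hfa P h hp, hfa P' (by rw [← h0]; exact h) (by rw [← h1]; exact hp)]
      · rw [hfb P h hp, hfb P' (by rw [← h0]; exact h) (by rw [← h1]; exact hp)]
    · rw [hfo P h, hfo P' (by rw [← h0]; exact h), h0]
  refine ⟨?_, ?_, ?_⟩
  · -- Unanimous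
    intro P c hc
    by_cases h : (P z0 : Pref A) ∈ TCC D Pstar
    · have hca : c = a := by rw [← hc z0]; exact htop _ h
      subst hca
      have htop1 : Pref.top (P z1 : Pref A) = c := hc z1
      have : Pref.SPrefers (P z1 : Pref A) c b := by
        rw [← htop1]
        exact hpreftop _ b (by rw [htop1]; exact hab)
      exact hfa P h this
    · rw [hfo P h]; exact hc z0
  · -- LocallySP
    intro P i Q hadj
    by_cases hi0 : i = z0
    · subst hi0
      have hup0 : Function.update P z0 Q z0 = Q := Function.update_self z0 Q P
      have hup1 : Function.update P z0 Q z1 = P z1 :=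
        Function.update_of_ne (Ne.symm hz01) Q P
      by_cases h : (P z0 : Pref A) ∈ TCC D Pstar
      · have htopa : Pref.top (P z0 : Pref A) = a := htop _ h
        rcases htri (P z1 : Pref A) with hp | hp
        · rw [hfa P h hp, ← htopa]
          exact hnotbelow _ _
        · rw [hfb P h hp]
          by_cases hQ : (Q : Pref A) ∈ TCC D Pstar
          · have : f (Function.update P z0 Q) = b := by
              apply hfb
              · rw [hup0]; exact hQ
              · rw [hup1]; exact hp
            rw [this]
            exact lt_irrefl _
          · have hQnbr : (Q : Pref A) ∈ Nbr D (TCC D Pstar) :=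
              ⟨Q.2, hQ, (P z0 : Pref A), h, hadj⟩
            have htopQ : Pref.top (Q : Pref A) = b := hnb _ hQnbr
            have : f (Function.update P z0 Q) = b := by
              rw [hfo _ (by rw [hup0]; exact hQ), hup0, htopQ]
            rw [this]
            exact lt_irrefl _
      · rw [hfo P h]
        exact hnotbelow _ _
    · by_cases hi1 : i = z1
      · subst hi1
        have hup0 : Function.update P z1 Q z0 = P z0 := Function.update_of_ne hz01 Q P
        by_cases h : (P z0 : Pref A) ∈ TCC D Pstar
        · rcases htri (P z1 : Pref A) with hp | hp
          · rw [hfa P h hp]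
            rcases htri (Q : Pref A) with hq | hq
            · rw [hfa _ (by rw [hup0]; exact h)
                (by rw [Function.update_self]; exact hq)]
              exact lt_irrefl _
            · rw [hfb _ (by rw [hup0]; exact h)
                (by rw [Function.update_self]; exact hq)]
              unfold Pref.SPrefers at hp ⊢
              omega
          · rw [hfb P h hp]
            rcases htri (Q : Pref A) with hq | hq
            · rw [hfa _ (by rw [hup0]; exact h)
                (by rw [Function.update_self]; exact hq)]
              unfold Pref.SPrefers at hp ⊢
              omega
            · rw [hfb _ (by rw [hup0]; exact h)
                (by rw [Function.update_self]; exact hq)]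
              exact lt_irrefl _
        · rw [hfo P h, hfo _ (by rw [hup0]; exact h), hup0]
          exact lt_irrefl _
      · have heq : f (Function.update P i Q) = f P := by
          apply hdet
          · exact Function.update_of_ne (fun h => hi0 h.symm) Q P
          · exact Function.update_of_ne (fun h => hi1 h.symm) Q P
        rw [heq]
        exact lt_irrefl _
  · -- not Dictatorial
    rintro ⟨i, hi⟩
    obtain ⟨c, hca, hcb⟩ : ∃ c : A, c ≠ a ∧ c ≠ b := by
      by_contra hcon
      push_neg at hcon
      have hsub : (Finset.univ : Finset A) ⊆ {a, b} := by
        intro x _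
        by_cases hx : x = a
        · simp [hx]
        · simp [hcon x hx]
      have h1 := Finset.card_le_card hsub
      have h2 : ({a, b} : Finset A).card ≤ 2 := by
        apply le_trans (Finset.card_insert_le _ _)
        simp
      rw [Finset.card_univ] at h1
      omega
    obtain ⟨R, hR, hRtop⟩ := hmr c
    obtain ⟨Qb, hQb, hQbtop⟩ := hmr b
    have hRnot : R ∉ TCC D Pstar := fun h => hca (by rw [← hRtop, htop _ h])
    by_cases hi0 : i = z0
    · subst hi0
      set P : Fin n → D := fun j => if j = z0 then ⟨Pstar, hP⟩ else ⟨Qb, hQb⟩ with hPdef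
      have hP0 : P z0 = ⟨Pstar, hP⟩ := by simp [hPdef]
      have hP1 : P z1 = ⟨Qb, hQb⟩ := by simp [hPdef, Ne.symm hz01]
      have hmem : (P z0 : Pref A) ∈ TCC D Pstar := by
        rw [hP0]; exact ReflTransGen.refl
      have hsp : Pref.SPrefers (P z1 : Pref A) b a := by
        rw [hP1]
        rw [← hQbtop]
        exact hpreftop _ a (fun h => hab (by rw [hQbtop] at h; exact h.symm))
      have hfPb : f P = b := hfb P hmem hsp
      have := hi P
      rw [hfPb, hP0] at this
      exact hab (this.trans ha)
    · set P : Fin n → D := fun j => if j = z0 then ⟨R, hR⟩ else ⟨Pstar, hP⟩ with hPdef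
      have hP0 : P z0 = ⟨R, hR⟩ := by simp [hPdef]
      have hPi : P i = ⟨Pstar, hP⟩ := by simp [hPdef, hi0]
      have hfPc : f P = c := by
        rw [hfo P (by rw [hP0]; exact hRnot), hP0]
        exact hRtop
      have := hi P
      rw [hfPc, hPi] at this
      exact hca (this.trans ha)
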